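/- arXiv:1411.6106 — 2 statements merged into one kernel-verified Lean document; each statement's English description precedes it below -/
import Mathlib

section
/- Let 0 < α < 1 and ω ∈ ℝ, and let b_r(r,θ) = Re(b_α(re^{iθ}) e^{−iθ}) be the radial component of b_α. Then for each θ, b_r(1,θ) = 0 and the partial derivative with respect to r at r = 1 equals ∂b_r/∂r(1,θ) = 2(1 − α² − ωα sin θ)/(1 − α²). Equivalently, with ρ = 1 − r the distance to the unit circle from inside, b_r = −ρ b⁰_α(θ) + o(ρ) as ρ → 0, where b⁰_α(θ) = 2(1 − α² − ωα sin θ)/(1 − α²). -/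
open Asymptotics

/-- The transformed Hopf field
`b_α(ζ) = ((ζ + α)(1 + αζ)/(1 − α²))(−1 + |(ζ + α)/(1 + αζ)|² + iω)`. -/
noncomputable def transformedField (α ω : ℝ) (ζ : ℂ) : ℂ :=
  (ζ + α) * (1 + α * ζ) / (1 - (α : ℂ) ^ 2) *
    (-1 + (‖(ζ + α) / (1 + α * ζ)‖ : ℂ) ^ 2 + Complex.I * ω)

/-- The radial component `b_r(r,θ) = Re(b_α(re^{iθ})e^{−iθ})`. -/
noncomputable def radialComponent (α ω r θ : ℝ) : ℝ :=
  (transformedField α ω ((r : ℂ) * Complex.exp (Complex.I * θ)) *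
      Complex.exp (-(Complex.I * θ))).re

/-!
Because `|ζ + α|² - |1 + αζ|² = (|ζ|² - 1)(1 - α²)`, the factor `-1 + |(ζ + α)/(1 + αζ)|²`
vanishes on the unit circle, and so does the imaginary part of `(ζ + α)(1 + αζ)e^{-iθ}` for
`ζ = r e^{iθ}`. Hence `b_r(r, θ) = (r² - 1) q(r)` with `q = radialFactor α ω θ` continuous at
`r = 1`.
A function `(r - 1) g(r)` with `g` continuous at `1` vanishes there with derivative `g(1)`, and
`2 q(1) = 2(1 - α² - ωα sin θ)/(1 - α²)`.
-/

open Filter Topology Complex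

theorem normSq_add_ofReal_sub_normSq_one_add (z : ℂ) (a : ℝ) :
    normSq (z + a) - normSq (1 + a * z) = (normSq z - 1) * (1 - a ^ 2) := by
  simp only [normSq_apply, add_re, add_im, ofReal_re, ofReal_im, one_re, one_im, re_ofReal_mul,
    im_ofReal_mul]
  ring

theorem hasDerivAt_of_eventuallyEq_sub_mul {f g : ℝ → ℝ} {x : ℝ}
    (hf : f =ᶠ[𝓝 x] fun y => (y - x) * g y) (hg : ContinuousAt g x) : HasDerivAt f (g x) x := by
  rw [hasDerivAt_iff_tendsto_slope]
  refine (hg.tendsto.mono_left nhdsWithin_le_nhds).congr' ?_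
  filter_upwards [nhdsWithin_le_nhds hf, self_mem_nhdsWithin] with y hy hyx
  rw [slope_def_field, hy, hf.eq_of_nhds, sub_self, zero_mul, sub_zero,
    mul_div_cancel_left₀ _ (sub_ne_zero.2 hyx)]

theorem HasDerivAt.isLittleO_const_sub {f : ℝ → ℝ} {f' x : ℝ} (hf : HasDerivAt f f' x) :
    (fun ρ => f (x - ρ) - f x + ρ * f') =o[𝓝 0] fun ρ => ρ := by
  have h := (hasDerivAt_iff_isLittleO_nhds_zero.1 hf).comp_tendsto
    (by simpa using (continuous_neg (G := ℝ)).tendsto 0)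
  simpa [Function.comp_def, sub_eq_add_neg] using h.neg_right

theorem transformedField_eq (α ω : ℝ) {ζ : ℂ} (hζ : 1 + α * ζ ≠ 0) :
    transformedField α ω ζ = (ζ + α) * (1 + α * ζ) / (1 - (α : ℂ) ^ 2) *
      (((normSq ζ - 1) * (1 - α ^ 2) / normSq (1 + α * ζ) : ℝ) + I * ω) := by
  have hn : normSq (1 + α * ζ) ≠ 0 := normSq_eq_zero.not.2 hζ
  have hsq : (‖(ζ + α) / (1 + α * ζ)‖ : ℂ) ^ 2 = (normSq (ζ + α) / normSq (1 + α * ζ) : ℝ) := by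
    rw [← ofReal_pow, Complex.sq_norm, map_div₀]
  rw [transformedField, hsq, ← normSq_add_ofReal_sub_normSq_one_add, sub_div, div_self hn]
  push_cast
  ring

theorem exp_I_mul_ofReal (θ : ℝ) : exp (I * θ) = Real.cos θ + Real.sin θ * I := by
  rw [mul_comm, exp_ofReal_mul_I]

theorem exp_neg_I_mul_ofReal (θ : ℝ) : exp (-(I * θ)) = Real.cos θ - Real.sin θ * I := by
  rw [show -(I * θ) = ((-θ : ℝ) : ℂ) * I by push_cast; ring, exp_ofReal_mul_I, Real.cos_neg,
    Real.sin_neg]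
  push_cast
  ring

theorem normSq_one_add_mul_polar (α r θ : ℝ) :
    normSq (1 + α * (r * exp (I * θ))) = 1 + 2 * α * r * Real.cos θ + α ^ 2 * r ^ 2 := by
  rw [exp_I_mul_ofReal]
  simp only [normSq_apply, add_re, add_im, mul_re, mul_im, ofReal_re, ofReal_im, one_re, one_im,
    I_re, I_im]
  linear_combination α ^ 2 * r ^ 2 * Real.cos_sq_add_sin_sq θ

theorem polar_factor_mul_exp_neg (α r θ : ℝ) :
    (r * exp (I * θ) + α) * (1 + α * (r * exp (I * θ))) * exp (-(I * θ)) =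
      ((r * (1 + α ^ 2) + α * (1 + r ^ 2) * Real.cos θ : ℝ) +
        (α * (r ^ 2 - 1) * Real.sin θ : ℝ) * I) := by
  rw [exp_I_mul_ofReal, exp_neg_I_mul_ofReal]
  apply Complex.ext <;>
    simp only [add_re, add_im, sub_re, sub_im, mul_re, mul_im, ofReal_re, ofReal_im, one_re, one_im,
      I_re, I_im]
  · linear_combination (α * r ^ 2 * Real.cos θ + r + α ^ 2 * r) * Real.cos_sq_add_sin_sq θ
  · linear_combination (α * r ^ 2 * Real.sin θ) * Real.cos_sq_add_sin_sq θ

noncomputable def radialFactor (α ω θ r : ℝ) : ℝ :=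
  (r * (1 + α ^ 2) + α * (1 + r ^ 2) * Real.cos θ) / (1 + 2 * α * r * Real.cos θ + α ^ 2 * r ^ 2) -
    ω * α * Real.sin θ / (1 - α ^ 2)

theorem radialComponent_eq_mul_radialFactor {α ω r θ : ℝ} (hα : 1 - α ^ 2 ≠ 0)
    (hB : 1 + 2 * α * r * Real.cos θ + α ^ 2 * r ^ 2 ≠ 0) :
    radialComponent α ω r θ = (r ^ 2 - 1) * radialFactor α ω θ r := by
  set ζ : ℂ := r * exp (I * θ)
  have hnorm : normSq (1 + α * ζ) = 1 + 2 * α * r * Real.cos θ + α ^ 2 * r ^ 2 :=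
    normSq_one_add_mul_polar α r θ
  have hζ : 1 + α * ζ ≠ 0 := fun h => hB (hnorm ▸ normSq_eq_zero.2 h)
  have hr : normSq ζ = r ^ 2 := by simp [ζ, normSq_eq_norm_sq]
  rw [radialComponent, transformedField_eq α ω hζ, hnorm, hr,
    show ∀ a b c d : ℂ, a / b * c * d = a * d * c / b by intros; ring, polar_factor_mul_exp_neg,
    ← ofReal_one, ← ofReal_pow, ← ofReal_sub, div_ofReal_re]
  simp only [add_re, mul_re, ofReal_re, ofReal_im, I_re, I_im, add_im, mul_im]
  rw [radialFactor]
  field_simp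
  ring

theorem radialFactor_one {α ω θ : ℝ} (hα : 1 - α ^ 2 ≠ 0)
    (hB : 1 + 2 * α * Real.cos θ + α ^ 2 ≠ 0) :
    radialFactor α ω θ 1 = (1 - α ^ 2 - ω * α * Real.sin θ) / (1 - α ^ 2) := by
  simp only [radialFactor, one_mul, mul_one, one_pow]
  rw [show 1 + α ^ 2 + α * (1 + 1) * Real.cos θ = 1 + 2 * α * Real.cos θ + α ^ 2 by ring,
    div_self hB]
  field_simp

/-- For each `θ`, `b_r(1,θ) = 0` and `∂b_r/∂r(1,θ) = 2(1 − α² − ωα sin θ)/(1 − α²)`;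
equivalently, with `ρ = 1 − r`, `b_r = −ρ b⁰_α(θ) + o(ρ)` as `ρ → 0`, where
`b⁰_α(θ) = 2(1 − α² − ωα sin θ)/(1 − α²)`. -/
theorem radial_component_boundary_expansion (α ω : ℝ) (hα₀ : 0 < α) (hα₁ : α < 1) :
    ∀ θ : ℝ,
      radialComponent α ω 1 θ = 0 ∧
      HasDerivAt (fun r : ℝ => radialComponent α ω r θ)
        (2 * (1 - α ^ 2 - ω * α * Real.sin θ) / (1 - α ^ 2)) 1 ∧
      (fun ρ : ℝ => radialComponent α ω (1 - ρ) θ +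
          ρ * (2 * (1 - α ^ 2 - ω * α * Real.sin θ) / (1 - α ^ 2)))
        =o[nhds 0] fun ρ : ℝ => ρ := by
  intro θ
  have hα : 1 - α ^ 2 ≠ 0 := by nlinarith
  have hB : 1 + 2 * α * 1 * Real.cos θ + α ^ 2 * 1 ^ 2 ≠ 0 := by
    nlinarith [Real.neg_one_le_cos θ, sq_nonneg (1 - α)]
  have hBnear : ∀ᶠ r in 𝓝 1, 1 + 2 * α * r * Real.cos θ + α ^ 2 * r ^ 2 ≠ 0 :=
    (by fun_prop : Continuous fun r : ℝ => 1 + 2 * α * r * Real.cos θ + α ^ 2 * r ^ 2)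
      |>.continuousAt.eventually_ne hB
  have hfactor : (fun r => radialComponent α ω r θ) =ᶠ[𝓝 1]
      fun r => (r - 1) * ((r + 1) * radialFactor α ω θ r) := by
    filter_upwards [hBnear] with r hr
    rw [radialComponent_eq_mul_radialFactor hα hr]
    ring
  have hcont : ContinuousAt (fun r => (r + 1) * radialFactor α ω θ r) 1 := by
    unfold radialFactor
    fun_prop (disch := exact hB)
  have hderiv := hasDerivAt_of_eventuallyEq_sub_mul hfactor hcont
  have hzero : radialComponent α ω 1 θ = 0 := by simpa using hfactor.eq_of_nhds
  rw [radialFactor_one hα (by simpa using hB), ← mul_div_assoc, one_add_one_eq_two] at hderiv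
  refine ⟨hzero, hderiv, ?_⟩
  simpa [hzero] using hderiv.isLittleO_const_sub
end

section
/- Let ω > 0, let σ : ℝ → ℝ be continuous and 2π-periodic, and let Z : ℝ → (0, ∞) be a C¹ 2π-periodic positive solution of Z'(s) − (4/ω) Z(s) = −(2/ω) σ(s). Then ∫₀^{2π} σ(s)/Z(s) ds = 4π. Consequently, with ξ = Z^{−1/2} the periodic solution of the Bernoulli equation and B(s) = ω the constant tangential speed, the real part of the second eigenvalue, ω₁ = (ω₂/π) ∫₀^{2π} σ(s) ξ(s)²/B(s) ds with ω₂ = ω, equals 4, independently of σ, ω and α. -/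
/-! The ODE `Z' - c Z = -d σ` gives `σ / Z = c / d - (log Z)' / d`, and `(log Z)'` integrates
to zero over a period of `Z`. Hence `∫₀^{2π} σ / Z = 2π c / d = 4π`, and `ξ² = 1 / Z` turns
`ω₁` into `(1 / π) ∫₀^{2π} σ / Z = 4`. -/

open Function intervalIntegral

theorem integral_deriv_div_eq_zero_of_periodic {Z Z' : ℝ → ℝ} {T : ℝ}
    (hZ : ∀ s, HasDerivAt Z (Z' s) s) (hZ' : Continuous Z') (hZne : ∀ s, Z s ≠ 0)
    (hZper : Periodic Z T) :
    ∫ s in (0 : ℝ)..T, Z' s / Z s = 0 := by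
  have hZc : Continuous Z := continuous_iff_continuousAt.mpr fun s => (hZ s).continuousAt
  have hlog : ∀ s, HasDerivAt (fun t => Real.log (Z t)) (Z' s / Z s) s :=
    fun s => (hZ s).log (hZne s)
  rw [integral_eq_sub_of_hasDerivAt (fun s _ => hlog s)
    ((hZ'.div hZc hZne).intervalIntegrable _ _)]
  simp [show Z T = Z 0 by simpa using hZper 0]

theorem integral_div_eq_of_periodic_linear_ode {σ Z Z' : ℝ → ℝ} {T c d : ℝ} (hd : d ≠ 0)
    (hZ : ∀ s, HasDerivAt Z (Z' s) s) (hZ' : Continuous Z') (hZne : ∀ s, Z s ≠ 0)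
    (hZper : Periodic Z T) (hode : ∀ s, Z' s - c * Z s = -d * σ s) :
    ∫ s in (0 : ℝ)..T, σ s / Z s = c / d * T := by
  have hZc : Continuous Z := continuous_iff_continuousAt.mpr fun s => (hZ s).continuousAt
  have hlogd : IntervalIntegrable (fun s => Z' s / Z s) MeasureTheory.volume 0 T :=
    (hZ'.div hZc hZne).intervalIntegrable 0 T
  have hσZ : ∀ s, σ s / Z s = c / d - d⁻¹ * (Z' s / Z s) := by
    intro s
    have hσ : σ s = (c * Z s - Z' s) / d := by
      field_simp
      linarith [hode s]
    rw [hσ]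
    field_simp [hZne s]
  rw [integral_congr fun s _ => hσZ s,
    integral_sub intervalIntegrable_const (hlogd.const_mul d⁻¹),
    integral_const_mul, integral_deriv_div_eq_zero_of_periodic hZ hZ' hZne hZper,
    integral_const, smul_eq_mul]
  ring

theorem real_part_second_eigenvalue_eq_four_general (ω : ℝ) (hω : 0 < ω) (σ Z Z' : ℝ → ℝ)
    (hZ : ∀ s, HasDerivAt Z (Z' s) s) (hZ' : Continuous Z')
    (hZper : Function.Periodic Z (2 * Real.pi)) (hZpos : ∀ s, 0 < Z s)
    (hode : ∀ s, Z' s - 4 / ω * Z s = -(2 / ω) * σ s) :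
    (∫ s in (0 : ℝ)..(2 * Real.pi), σ s / Z s) = 4 * Real.pi ∧
    ω / Real.pi *
        ∫ s in (0 : ℝ)..(2 * Real.pi), σ s * ((Real.sqrt (Z s))⁻¹) ^ 2 / ω = 4 := by
  have hintegral : ∫ s in (0 : ℝ)..(2 * Real.pi), σ s / Z s = 4 * Real.pi := by
    rw [integral_div_eq_of_periodic_linear_ode (by positivity) hZ hZ'
      (fun s => (hZpos s).ne') hZper hode]
    field_simp
  have hξ : ∀ s, σ s * ((Real.sqrt (Z s))⁻¹) ^ 2 / ω = σ s / Z s / ω := fun s => by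
    rw [inv_pow, Real.sq_sqrt (hZpos s).le, div_eq_mul_inv (σ s)]
  refine ⟨hintegral, ?_⟩
  rw [integral_congr fun s _ => hξ s, integral_div, hintegral]
  field_simp

/-- If `Z` is a positive `2π`-periodic `C¹` solution of `Z'(s) − (4/ω)Z(s) = −(2/ω)σ(s)`
with `σ` continuous and `2π`-periodic, then `∫₀^{2π} σ(s)/Z(s) ds = 4π`; consequently,
with `ξ = Z^{−1/2}`, `B(s) = ω` and `ω₂ = ω`, the real part of the second eigenvalue
`ω₁ = (ω₂/π)∫₀^{2π} σ(s)ξ(s)²/B(s) ds` equals `4`, independently of `σ`, `ω` and `α`. -/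
theorem real_part_second_eigenvalue_eq_four (ω : ℝ) (hω : 0 < ω) (σ Z Z' : ℝ → ℝ)
    (hσ : Continuous σ) (hσper : Function.Periodic σ (2 * Real.pi))
    (hZ : ∀ s, HasDerivAt Z (Z' s) s) (hZ' : Continuous Z')
    (hZper : Function.Periodic Z (2 * Real.pi)) (hZpos : ∀ s, 0 < Z s)
    (hode : ∀ s, Z' s - 4 / ω * Z s = -(2 / ω) * σ s) :
    (∫ s in (0 : ℝ)..(2 * Real.pi), σ s / Z s) = 4 * Real.pi ∧
    ω / Real.pi *
        ∫ s in (0 : ℝ)..(2 * Real.pi), σ s * ((Real.sqrt (Z s))⁻¹) ^ 2 / ω = 4 :=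
  real_part_second_eigenvalue_eq_four_general ω hω σ Z Z' hZ hZ' hZper hZpos hode
end
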